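/- Let X, X' be real random variables coupled by the comonotone coupling π (with joint CDF min(F_X(x), F_{X'}(x'))), and suppose |X - X'| ≤ Δ π-almost surely. Let N be an independent Laplace random variable with scale θ ≥ Δ/ε for some ε > 0. Then the densities f and f' of Y = X + N and Y' = X' + N satisfy f(y) ≤ e^ε f'(y) for all y ∈ ℝ. -/
import Mathlib


open MeasureTheory

/-- The Laplace density with scale parameter `θ`. -/
noncomputable def lap (θ z : ℝ) : ℝ := (1 / (2 * θ)) * Real.exp (-|z| / θ)

lemma lap_cont (θ : ℝ) : Continuous (lap θ) := by
  unfold lap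
  fun_prop

lemma lap_nonneg (θ z : ℝ) (hθ : 0 < θ) : 0 ≤ lap θ z := by
  unfold lap
  positivity

lemma lap_le (θ z : ℝ) (hθ : 0 < θ) : lap θ z ≤ 1 / (2 * θ) := by
  unfold lap
  have h1 : Real.exp (-|z| / θ) ≤ 1 := by
    rw [Real.exp_le_one_iff]
    have := abs_nonneg z
    have : -|z| ≤ 0 := by linarith
    exact div_nonpos_of_nonpos_of_nonneg this hθ.le
  nlinarith [one_div_pos.mpr (by linarith : (0:ℝ) < 2 * θ)]

/-- The `W₁`/Kantorovich mechanism: if `X, X'` are coupled by `π` with `|X - X'| ≤ Δ`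
`π`-a.s., and independent Laplace noise of scale `θ ≥ Δ/ε` is added, then the densities
of `X + N` and `X' + N` satisfy `f(y) ≤ e^ε f'(y)` for all `y`. -/
theorem kantorovich_mechanism (π : Measure (ℝ × ℝ)) [IsProbabilityMeasure π]
    (Δ ε θ : ℝ) (hε : 0 < ε) (hθ : 0 < θ) (hcal : Δ / ε ≤ θ)
    (hsupp : ∀ᵐ z ∂π, |z.1 - z.2| ≤ Δ) (y : ℝ) :
    (∫ z, lap θ (y - z.1) ∂π) ≤ Real.exp ε * ∫ z, lap θ (y - z.2) ∂π := by
  have hΔε : Δ / θ ≤ ε := by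
    rw [div_le_iff₀ hε] at hcal
    rw [div_le_iff₀ hθ]
    nlinarith
  have hint : ∀ (g : ℝ × ℝ → ℝ), Continuous g →
      Integrable (fun z => lap θ (g z)) π := by
    intro g hg
    refine (integrable_const (1 / (2 * θ))).mono'
      (((lap_cont θ).comp hg).aestronglyMeasurable) ?_
    filter_upwards with z
    rw [Real.norm_eq_abs, abs_of_nonneg (lap_nonneg _ _ hθ)]
    exact lap_le _ _ hθ
  have h1 : Integrable (fun z : ℝ × ℝ => lap θ (y - z.1)) π :=
    hint _ (by fun_prop)
  have h2 : Integrable (fun z : ℝ × ℝ => lap θ (y - z.2)) π :=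
    hint _ (by fun_prop)
  rw [← integral_const_mul]
  refine integral_mono_ae h1 (h2.const_mul _) ?_
  filter_upwards [hsupp] with z hz
  unfold lap
  have habs : |y - z.2| - Δ ≤ |y - z.1| := by
    have := abs_sub_abs_le_abs_sub (y - z.2) (y - z.1)
    have h' : |(y - z.2) - (y - z.1)| = |z.1 - z.2| := by
      rw [show (y - z.2) - (y - z.1) = z.1 - z.2 by ring]
    linarith [h' ▸ this]
  have hexp : Real.exp (-|y - z.1| / θ) ≤ Real.exp ε * Real.exp (-|y - z.2| / θ) := by
    rw [← Real.exp_add, Real.exp_le_exp, div_le_iff₀ hθ]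
    have h1 : -|y - z.2| / θ * θ = -|y - z.2| := div_mul_cancel₀ _ hθ.ne'
    have h2 : Δ ≤ ε * θ := (div_le_iff₀ hθ).mp hΔε
    nlinarith [habs]
  have hc : (0:ℝ) < 1 / (2 * θ) := by positivity
  nlinarith [mul_le_mul_of_nonneg_left hexp hc.le]
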